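/- arXiv:2506.04578 — 2 statements merged into one kernel-verified Lean document; each statement's English description precedes it below -/
import Mathlib

section
/- Let v > 0 be smooth and define ∇_η = ∂_y − (F/v)∂_z where F(y,z) = ∫₀^z ∂_y v(y,z')dz', and ∇_{ψ̃} = (1/v)∂_z. Then [∇_η, ∇_{ψ̃}] = 0, i.e. for every smooth f, ∇_η(∇_{ψ̃} f) = ∇_{ψ̃}(∇_η f). -/
open Real

/-- Partial derivative in the first (y) variable. -/
noncomputable def pdy (f : ℝ → ℝ → ℝ) (y z : ℝ) : ℝ := deriv (fun t => f t z) y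

/-- Partial derivative in the second (z) variable. -/
noncomputable def pdz (f : ℝ → ℝ → ℝ) (y z : ℝ) : ℝ := deriv (fun t => f y t) z

/-- The vector field `∇_η f = ∂_y f − ((∫₀^z ∂_y v dz')/v) ∂_z f`. -/
noncomputable def Deta (v f : ℝ → ℝ → ℝ) (y z : ℝ) : ℝ :=
  pdy f y z - ((∫ t in (0:ℝ)..z, pdy v y t) / v y z) * pdz f y z

/-- The vector field `∇_ψ̃ f = (1/v) ∂_z f`. -/
noncomputable def Dpsit (v f : ℝ → ℝ → ℝ) (y z : ℝ) : ℝ :=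
  pdz f y z / v y z

section aux

variable {f : ℝ → ℝ → ℝ}

lemma hasDerivAt_slice_y (hf : ContDiff ℝ (⊤ : ℕ∞) (fun p : ℝ × ℝ => f p.1 p.2)) (y z : ℝ) :
    HasDerivAt (fun t => f t z) (pdy f y z) y := by
  have h := ((hf.differentiable (by simp) (y, z)).hasFDerivAt).comp_hasDerivAt y
    ((hasDerivAt_id y).prodMk (hasDerivAt_const y z))
  have hd : DifferentiableAt ℝ (fun t => f t z) y := h.differentiableAt
  exact hd.hasDerivAt

lemma hasDerivAt_slice_z (hf : ContDiff ℝ (⊤ : ℕ∞) (fun p : ℝ × ℝ => f p.1 p.2)) (y z : ℝ) :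
    HasDerivAt (fun t => f y t) (pdz f y z) z := by
  have h := ((hf.differentiable (by simp) (y, z)).hasFDerivAt).comp_hasDerivAt z
    ((hasDerivAt_const z y).prodMk (hasDerivAt_id z))
  have hd : DifferentiableAt ℝ (fun t => f y t) z := h.differentiableAt
  exact hd.hasDerivAt

lemma pdy_eq (hf : ContDiff ℝ (⊤ : ℕ∞) (fun p : ℝ × ℝ => f p.1 p.2)) (y z : ℝ) :
    pdy f y z = fderiv ℝ (fun p : ℝ × ℝ => f p.1 p.2) (y, z) (1, 0) := by
  have h := ((hf.differentiable (by simp) (y, z)).hasFDerivAt).comp_hasDerivAt y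
    ((hasDerivAt_id y).prodMk (hasDerivAt_const y z))
  exact h.deriv

lemma pdz_eq (hf : ContDiff ℝ (⊤ : ℕ∞) (fun p : ℝ × ℝ => f p.1 p.2)) (y z : ℝ) :
    pdz f y z = fderiv ℝ (fun p : ℝ × ℝ => f p.1 p.2) (y, z) (0, 1) := by
  have h := ((hf.differentiable (by simp) (y, z)).hasFDerivAt).comp_hasDerivAt z
    ((hasDerivAt_const z y).prodMk (hasDerivAt_id z))
  exact h.deriv

lemma contDiff_pdy (hf : ContDiff ℝ (⊤ : ℕ∞) (fun p : ℝ × ℝ => f p.1 p.2)) :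
    ContDiff ℝ (⊤ : ℕ∞) (fun p : ℝ × ℝ => pdy f p.1 p.2) := by
  have h := hf.fderiv_right (m := (⊤ : ℕ∞)) (by simp)
  have he : (fun p : ℝ × ℝ => pdy f p.1 p.2)
      = fun p : ℝ × ℝ => fderiv ℝ (fun q : ℝ × ℝ => f q.1 q.2) p ((1 : ℝ), (0 : ℝ)) := by
    funext p
    simpa using pdy_eq hf p.1 p.2
  rw [he]
  exact h.clm_apply contDiff_const

lemma contDiff_pdz (hf : ContDiff ℝ (⊤ : ℕ∞) (fun p : ℝ × ℝ => f p.1 p.2)) :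
    ContDiff ℝ (⊤ : ℕ∞) (fun p : ℝ × ℝ => pdz f p.1 p.2) := by
  have h := hf.fderiv_right (m := (⊤ : ℕ∞)) (by simp)
  have he : (fun p : ℝ × ℝ => pdz f p.1 p.2)
      = fun p : ℝ × ℝ => fderiv ℝ (fun q : ℝ × ℝ => f q.1 q.2) p ((0 : ℝ), (1 : ℝ)) := by
    funext p
    simpa using pdz_eq hf p.1 p.2
  rw [he]
  exact h.clm_apply contDiff_const

/-- Clairaut's theorem: mixed partials commute. -/
lemma pdy_pdz_comm (hf : ContDiff ℝ (⊤ : ℕ∞) (fun p : ℝ × ℝ => f p.1 p.2)) (y z : ℝ) :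
    pdy (pdz f) y z = pdz (pdy f) y z := by
  set g := fun p : ℝ × ℝ => f p.1 p.2 with hg
  have hg1 : Differentiable ℝ g := hf.differentiable (by simp)
  have hg2 : ContDiff ℝ (⊤ : ℕ∞) (fderiv ℝ g) := hf.fderiv_right (m := (⊤ : ℕ∞)) (by simp)
  have hg2d : DifferentiableAt ℝ (fderiv ℝ g) (y, z) := (hg2.differentiable (by simp)) (y, z)
  have hsymm := second_derivative_symmetric (f := g) (f' := fderiv ℝ g)
    (f'' := fderiv ℝ (fderiv ℝ g) (y, z)) (fun p => (hg1 p).hasFDerivAt)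
    hg2d.hasFDerivAt ((1 : ℝ), (0 : ℝ)) ((0 : ℝ), (1 : ℝ))
  -- LHS
  have e1 : HasDerivAt (fun t => fderiv ℝ g (t, z))
      (fderiv ℝ (fderiv ℝ g) (y, z) ((1 : ℝ), (0 : ℝ))) y :=
    hg2d.hasFDerivAt.comp_hasDerivAt y ((hasDerivAt_id y).prodMk (hasDerivAt_const y z))
  have e1' : HasDerivAt (fun t => fderiv ℝ g (t, z) ((0 : ℝ), (1 : ℝ)))
      (fderiv ℝ (fderiv ℝ g) (y, z) ((1 : ℝ), (0 : ℝ)) ((0 : ℝ), (1 : ℝ))) y := by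
    have := e1.clm_apply (hasDerivAt_const y ((0 : ℝ), (1 : ℝ)))
    simpa using this
  have L : pdy (pdz f) y z
      = fderiv ℝ (fderiv ℝ g) (y, z) ((1 : ℝ), (0 : ℝ)) ((0 : ℝ), (1 : ℝ)) := by
    have hfun : (fun t => pdz f t z) = fun t => fderiv ℝ g (t, z) ((0 : ℝ), (1 : ℝ)) := by
      funext t; exact pdz_eq hf t z
    show deriv (fun t => pdz f t z) y = _
    rw [hfun]
    exact e1'.deriv
  -- RHS
  have e2 : HasDerivAt (fun t => fderiv ℝ g (y, t))
      (fderiv ℝ (fderiv ℝ g) (y, z) ((0 : ℝ), (1 : ℝ))) z :=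
    hg2d.hasFDerivAt.comp_hasDerivAt z ((hasDerivAt_const z y).prodMk (hasDerivAt_id z))
  have e2' : HasDerivAt (fun t => fderiv ℝ g (y, t) ((1 : ℝ), (0 : ℝ)))
      (fderiv ℝ (fderiv ℝ g) (y, z) ((0 : ℝ), (1 : ℝ)) ((1 : ℝ), (0 : ℝ))) z := by
    have := e2.clm_apply (hasDerivAt_const z ((1 : ℝ), (0 : ℝ)))
    simpa using this
  have R : pdz (pdy f) y z
      = fderiv ℝ (fderiv ℝ g) (y, z) ((0 : ℝ), (1 : ℝ)) ((1 : ℝ), (0 : ℝ)) := by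
    have hfun : (fun t => pdy f y t) = fun t => fderiv ℝ g (y, t) ((1 : ℝ), (0 : ℝ)) := by
      funext t; exact pdy_eq hf y t
    show deriv (fun t => pdy f y t) z = _
    rw [hfun]
    exact e2'.deriv
  rw [L, R, hsymm]

end aux

/-- The commutator `[∇_η, ∇_ψ̃]` vanishes (equation (3.2) of the paper). -/
theorem commutator_eta_psitilde_eq_zero
    (v f : ℝ → ℝ → ℝ)
    (hv : ContDiff ℝ (⊤ : ℕ∞) (fun p : ℝ × ℝ => v p.1 p.2))
    (hf : ContDiff ℝ (⊤ : ℕ∞) (fun p : ℝ × ℝ => f p.1 p.2))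
    (hvpos : ∀ y z, 0 < v y z) :
    ∀ y z, Deta v (Dpsit v f) y z = Dpsit v (Deta v f) y z := by
  intro y z
  have hvne : v y z ≠ 0 := (hvpos y z).ne'
  have hfz := contDiff_pdz hf
  have hvy := contDiff_pdy hv
  -- slice derivatives
  have hvY : HasDerivAt (fun t => v t z) (pdy v y z) y := hasDerivAt_slice_y hv y z
  have hvZ : HasDerivAt (fun t => v y t) (pdz v y z) z := hasDerivAt_slice_z hv y z
  have hfzY : HasDerivAt (fun t => pdz f t z) (pdy (pdz f) y z) y :=
    hasDerivAt_slice_y hfz y z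
  have hfzZ : HasDerivAt (fun t => pdz f y t) (pdz (pdz f) y z) z :=
    hasDerivAt_slice_z hfz y z
  have hfyZ : HasDerivAt (fun t => pdy f y t) (pdz (pdy f) y z) z :=
    hasDerivAt_slice_z (contDiff_pdy hf) y z
  -- FTC: the z-derivative of the integral
  have hvycont : Continuous (fun t => pdy v y t) :=
    hvy.continuous.comp (continuous_const.prodMk continuous_id)
  have hF : HasDerivAt (fun t => ∫ s in (0:ℝ)..t, pdy v y s) (pdy v y z) z :=
    intervalIntegral.integral_hasDerivAt_right
      (hvycont.intervalIntegrable 0 z)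
      hvycont.aestronglyMeasurable.stronglyMeasurableAtFilter
      hvycont.continuousAt
  set F : ℝ := ∫ s in (0:ℝ)..z, pdy v y s with hFdef
  -- pdy (Dpsit v f) y z
  have h1 : pdy (Dpsit v f) y z
      = (pdy (pdz f) y z * v y z - pdz f y z * pdy v y z) / (v y z) ^ 2 := by
    have := (hfzY.div hvY hvne).deriv
    simpa [Dpsit, pdy, Pi.div_def] using this
  -- pdz (Dpsit v f) y z
  have h2 : pdz (Dpsit v f) y z
      = (pdz (pdz f) y z * v y z - pdz f y z * pdz v y z) / (v y z) ^ 2 := by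
    have := (hfzZ.div hvZ hvne).deriv
    simpa [Dpsit, pdz, Pi.div_def] using this
  -- pdz (Deta v f) y z
  have h3 : pdz (Deta v f) y z
      = pdz (pdy f) y z
        - (((pdy v y z * v y z - F * pdz v y z) / (v y z) ^ 2) * pdz f y z
           + (F / v y z) * pdz (pdz f) y z) := by
    have hq : HasDerivAt (fun t => (∫ s in (0:ℝ)..t, pdy v y s) / v y t)
        ((pdy v y z * v y z - F * pdz v y z) / (v y z) ^ 2) z := hF.div hvZ hvne
    have hm := hq.mul hfzZ
    have h := hfyZ.sub hm
    have := h.deriv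
    simpa [Deta, pdz, Pi.sub_def, Pi.mul_def, mul_comm, mul_assoc, mul_left_comm, add_comm] using this
  -- now expand both sides
  rw [Deta, Dpsit, h1, h2, h3, pdy_pdz_comm hf y z]
  rw [← hFdef]
  field_simp
  ring
end

section
/- (Maximum principle in a bounded strip.) Let Ω₀ = [0,X]×[0,Y]×[0,z₀]. Suppose f is smooth on Ω₀, f ≤ 0 on the portion of the boundary {z=0} ∪ {z=z₀} ∪ {x=0} ∪ {y=0}, and Lf ≤ 0 in the interior, where Lf = ∇_ξ f + (1+q̃)∇_η f + b ∇_ψ f − u_n ∇_ψ² f + c f with smooth bounded coefficients b, c, with 1+q̃ > 0, u_n > 0, u_{n-1} > 0 on the interior, ∇_ξ = ∂_x − G∂_z, ∇_η = ∂_y − F∂_z, ∇_ψ = (1/u_{n-1})∂_z. Then f ≤ 0 on all of Ω₀. -/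
open Real Set

section AuxMaxPrinciple
open Filter Topology

lemma aux_deriv_nonneg_of_max_left {φ : ℝ → ℝ} {l a : ℝ} (hla : l < a)
    (hd : DifferentiableAt ℝ φ a) (hmax : ∀ t ∈ Set.Icc l a, φ t ≤ φ a) :
    0 ≤ deriv φ a := by
  have hs : Tendsto (slope φ a) (𝓝[<] a) (𝓝 (deriv φ a)) :=
    (hasDerivAt_iff_tendsto_slope.1 hd.hasDerivAt).mono_left
      (nhdsWithin_mono _ (fun x hx => ne_of_lt hx))
  refine ge_of_tendsto hs ?_
  filter_upwards [Ioo_mem_nhdsLT_of_mem ⟨hla, le_refl a⟩] with t ht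
  have h1 : φ t - φ a ≤ 0 := sub_nonpos.2 (hmax t ⟨ht.1.le, ht.2.le⟩)
  have h2 : t - a < 0 := sub_neg.2 ht.2
  rw [slope_def_field]
  exact div_nonneg_iff.2 (Or.inr ⟨h1, h2.le⟩)

lemma aux_second_order {ψ u : ℝ → ℝ} {a zb : ℝ} (ha : a ∈ Set.Ioo 0 zb)
    (hψd : ∀ t ∈ Set.Ioo (0:ℝ) zb, DifferentiableAt ℝ ψ t)
    (hu : ∀ t ∈ Set.Ioo (0:ℝ) zb, 0 < u t)
    (hmax : ∀ t ∈ Set.Icc (0:ℝ) zb, ψ t ≤ ψ a)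
    (hd0 : deriv ψ a = 0) :
    deriv (fun t => deriv ψ t / u t) a ≤ 0 := by
  set h : ℝ → ℝ := fun t => deriv ψ t / u t with hh
  by_cases hdiff : DifferentiableAt ℝ h a
  · by_contra hT
    push_neg at hT
    have hs : Tendsto (slope h a) (𝓝[>] a) (𝓝 (deriv h a)) :=
      (hasDerivAt_iff_tendsto_slope.1 hdiff.hasDerivAt).mono_left
        (nhdsWithin_mono _ (fun x hx => ne_of_gt hx))
    have hev : ∀ᶠ t in 𝓝[>] a, 0 < slope h a t := hs.eventually (eventually_gt_nhds hT)
    have hIoo : Set.Ioo a zb ∈ 𝓝[>] a := Ioo_mem_nhdsGT_of_mem ⟨le_refl a, ha.2⟩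
    have hsets : {t | 0 < slope h a t} ∩ Set.Ioo a zb ∈ 𝓝[>] a :=
      Filter.inter_mem hev hIoo
    obtain ⟨w, hw, hsub⟩ := mem_nhdsGT_iff_exists_Ioo_subset.1 hsets
    set m := min w zb with hm
    have ham : a < m := lt_min hw ha.2
    set cpt := (a + m) / 2 with hcpt
    have hac : a < cpt := by simp [hcpt]; linarith
    have hcm : cpt < m := by simp [hcpt]; linarith
    have hIsub : Set.Ioo a m ⊆ {t | 0 < slope h a t} ∩ Set.Ioo a zb := by
      intro t ht
      exact hsub ⟨ht.1, lt_of_lt_of_le ht.2 (min_le_left _ _)⟩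
    have hha : h a = 0 := by simp [hh, hd0]
    have hderiv_pos : ∀ t ∈ Set.Ioo a cpt, 0 < deriv ψ t := by
      intro t ht
      have htm : t ∈ Set.Ioo a m := ⟨ht.1, ht.2.trans hcm⟩
      obtain ⟨hslope, htzb⟩ := hIsub htm
      have htIoo : t ∈ Set.Ioo (0:ℝ) zb := ⟨lt_trans ha.1 htzb.1, htzb.2⟩
      have hslope' : 0 < (h t - h a) / (t - a) := by
        have h0 : 0 < slope h a t := hslope
        rwa [slope_def_field] at h0
      have hta : 0 < t - a := sub_pos.2 ht.1
      have hht : 0 < h t := by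
        rw [hha, sub_zero] at hslope'
        exact (div_pos_iff.1 hslope').resolve_right (fun hc => absurd hta (by linarith [hc.2])) |>.1
      exact (div_pos_iff.1 hht).resolve_right
        (fun hc => absurd (hu t htIoo) (by linarith [hc.2])) |>.1
    have hcont : ContinuousOn ψ (Set.Icc a cpt) := by
      intro t ht
      have : t ∈ Set.Ioo (0:ℝ) zb :=
        ⟨lt_of_lt_of_le ha.1 ht.1, lt_of_le_of_lt ht.2 (hcm.trans_le (min_le_right _ _))⟩
      exact (hψd t this).continuousAt.continuousWithinAt
    have hmono : StrictMonoOn ψ (Set.Icc a cpt) := by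
      apply strictMonoOn_of_deriv_pos (convex_Icc a cpt) hcont
      intro t ht
      rw [interior_Icc] at ht
      exact hderiv_pos t ht
    have hlt : ψ a < ψ cpt := hmono ⟨le_refl a, hac.le⟩ ⟨hac.le, le_refl cpt⟩ hac
    have : ψ cpt ≤ ψ a := hmax cpt ⟨(ha.1.trans hac).le, (hcm.trans_le (min_le_right _ _)).le⟩
    linarith
  · rw [deriv_zero_of_not_differentiableAt hdiff]

lemma aux_exists_lt {φ : ℝ → ℝ} {X : ℝ} (hX : 0 < X) {x : ℝ}
    (hx : x ∈ Set.Icc 0 X) (hc : ContinuousWithinAt φ (Set.Icc 0 X) x)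
    (hpos : 0 < φ x) : ∃ x₁ ∈ Set.Ico 0 X, 0 < φ x₁ := by
  rcases lt_or_eq_of_le hx.2 with h | h
  · exact ⟨x, ⟨hx.1, h⟩, hpos⟩
  · subst h
    have hc' : ContinuousWithinAt φ (Set.Ico 0 x) x := hc.mono Set.Ico_subset_Icc_self
    have hne : (𝓝[Set.Ico 0 x] x).NeBot := by
      rw [← mem_closure_iff_nhdsWithin_neBot, closure_Ico (ne_of_lt hX)]
      exact hx
    have hev : ∀ᶠ t in 𝓝[Set.Ico 0 x] x, 0 < φ t :=
      hc'.eventually (eventually_gt_nhds hpos) |>.mono (fun t ht => ht)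
    obtain ⟨t, htpos, ht⟩ := (hev.and (eventually_mem_nhdsWithin (s := Set.Ico 0 x))).exists
    exact ⟨t, ht, htpos⟩

end AuxMaxPrinciple

open Filter Topology

/-- Partial derivative in the first (x) variable. -/
noncomputable def pd1 (f : ℝ → ℝ → ℝ → ℝ) (x y z : ℝ) : ℝ := deriv (fun t => f t y z) x

/-- Partial derivative in the second (y) variable. -/
noncomputable def pd2 (f : ℝ → ℝ → ℝ → ℝ) (x y z : ℝ) : ℝ := deriv (fun t => f x t z) y

/-- Partial derivative in the third (z) variable. -/
noncomputable def pd3 (f : ℝ → ℝ → ℝ → ℝ) (x y z : ℝ) : ℝ := deriv (fun t => f x y t) z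

/-- The vector field `∇_ψ f = (1/u₁) ∂_z f`. -/
noncomputable def Dpsi (u1 f : ℝ → ℝ → ℝ → ℝ) (x y z : ℝ) : ℝ :=
  pd3 f x y z / u1 x y z

/-- The operator `L f = ∇_ξ f + (1+q̃) ∇_η f + b ∇_ψ f − uₙ ∇_ψ² f + c f`
with `∇_ξ = ∂_x − G ∂_z`, `∇_η = ∂_y − F ∂_z`, `∇_ψ = (1/u₁) ∂_z`. -/
noncomputable def Lop (u1 un G F qt b c f : ℝ → ℝ → ℝ → ℝ) (x y z : ℝ) : ℝ :=
  (pd1 f x y z - G x y z * pd3 f x y z)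
    + (1 + qt x y z) * (pd2 f x y z - F x y z * pd3 f x y z)
    + b x y z * Dpsi u1 f x y z
    - un x y z * Dpsi u1 (Dpsi u1 f) x y z
    + c x y z * f x y z

set_option maxHeartbeats 1000000 in
/-- Lemma 3.1 of the paper: maximum principle in the bounded strip
`[0,X]×[0,Y]×[0,z₀]`. -/
theorem maximum_principle_bounded
    (X Y z₀ : ℝ) (hX : 0 < X) (hY : 0 < Y) (hz₀ : 0 < z₀)
    (u1 un G F qt b c f : ℝ → ℝ → ℝ → ℝ) (Cb Cc : ℝ)
    (hf : ContDiffOn ℝ (⊤ : ℕ∞) (fun p : ℝ × ℝ × ℝ => f p.1 p.2.1 p.2.2)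
      (Set.Icc 0 X ×ˢ Set.Icc 0 Y ×ˢ Set.Icc 0 z₀))
    (hbs : ContDiffOn ℝ (⊤ : ℕ∞) (fun p : ℝ × ℝ × ℝ => b p.1 p.2.1 p.2.2)
      (Set.Icc 0 X ×ˢ Set.Icc 0 Y ×ˢ Set.Icc 0 z₀))
    (hcs : ContDiffOn ℝ (⊤ : ℕ∞) (fun p : ℝ × ℝ × ℝ => c p.1 p.2.1 p.2.2)
      (Set.Icc 0 X ×ˢ Set.Icc 0 Y ×ˢ Set.Icc 0 z₀))
    (hbbd : ∀ x y z, 0 ≤ x → x ≤ X → 0 ≤ y → y ≤ Y → 0 ≤ z → z ≤ z₀ →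
      |b x y z| ≤ Cb)
    (hcbd : ∀ x y z, 0 ≤ x → x ≤ X → 0 ≤ y → y ≤ Y → 0 ≤ z → z ≤ z₀ →
      |c x y z| ≤ Cc)
    (hqt : ∀ x y z, 0 < x → x ≤ X → 0 < y → y ≤ Y → 0 < z → z < z₀ →
      0 < 1 + qt x y z)
    (hun : ∀ x y z, 0 < x → x ≤ X → 0 < y → y ≤ Y → 0 < z → z < z₀ →
      0 < un x y z)
    (hu1 : ∀ x y z, 0 < x → x ≤ X → 0 < y → y ≤ Y → 0 < z → z < z₀ →
      0 < u1 x y z)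
    (hbdz : ∀ x y, 0 ≤ x → x ≤ X → 0 ≤ y → y ≤ Y → f x y 0 ≤ 0 ∧ f x y z₀ ≤ 0)
    (hbdx : ∀ y z, 0 ≤ y → y ≤ Y → 0 ≤ z → z ≤ z₀ → f 0 y z ≤ 0)
    (hbdy : ∀ x z, 0 ≤ x → x ≤ X → 0 ≤ z → z ≤ z₀ → f x 0 z ≤ 0)
    (hL : ∀ x y z, 0 < x → x ≤ X → 0 < y → y ≤ Y → 0 < z → z < z₀ →
      Lop u1 un G F qt b c f x y z ≤ 0) :
    ∀ x y z, 0 ≤ x → x ≤ X → 0 ≤ y → y ≤ Y → 0 ≤ z → z ≤ z₀ →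
      f x y z ≤ 0 := by
  intro x y z hx0 hxX hy0 hyY hz0 hzz
  by_contra hpos
  push_neg at hpos
  have hfc : ContinuousOn (fun p : ℝ × ℝ × ℝ => f p.1 p.2.1 p.2.2)
      (Set.Icc 0 X ×ˢ Set.Icc 0 Y ×ˢ Set.Icc 0 z₀) := hf.continuousOn
  -- Step 1: find x₁ < X with f x₁ y z > 0
  have hcx : ContinuousWithinAt (fun t => f t y z) (Set.Icc 0 X) x := by
    have h1 : ContinuousWithinAt (fun p : ℝ × ℝ × ℝ => f p.1 p.2.1 p.2.2)
        (Set.Icc 0 X ×ˢ Set.Icc 0 Y ×ˢ Set.Icc 0 z₀) (x, y, z) :=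
      hfc _ ⟨⟨hx0, hxX⟩, ⟨hy0, hyY⟩, ⟨hz0, hzz⟩⟩
    have h2 : ContinuousWithinAt (fun t : ℝ => ((t, y, z) : ℝ × ℝ × ℝ)) (Set.Icc 0 X) x :=
      (continuous_id.prodMk continuous_const).continuousWithinAt
    exact ContinuousWithinAt.comp (g := fun p : ℝ × ℝ × ℝ => f p.1 p.2.1 p.2.2)
      (f := fun t : ℝ => ((t, y, z) : ℝ × ℝ × ℝ)) h1 h2
      (fun t ht => ⟨ht, ⟨hy0, hyY⟩, ⟨hz0, hzz⟩⟩)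
  obtain ⟨x₁, ⟨hx₁0, hx₁X⟩, hfx₁⟩ := aux_exists_lt hX ⟨hx0, hxX⟩ hcx hpos
  -- Step 2: find y₁ < Y with f x₁ y₁ z > 0
  have hcy : ContinuousWithinAt (fun t => f x₁ t z) (Set.Icc 0 Y) y := by
    have h1 : ContinuousWithinAt (fun p : ℝ × ℝ × ℝ => f p.1 p.2.1 p.2.2)
        (Set.Icc 0 X ×ˢ Set.Icc 0 Y ×ˢ Set.Icc 0 z₀) (x₁, y, z) :=
      hfc _ ⟨⟨hx₁0, hx₁X.le⟩, ⟨hy0, hyY⟩, ⟨hz0, hzz⟩⟩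
    have h2 : ContinuousWithinAt (fun t : ℝ => ((x₁, t, z) : ℝ × ℝ × ℝ)) (Set.Icc 0 Y) y :=
      (continuous_const.prodMk (continuous_id.prodMk continuous_const)).continuousWithinAt
    exact ContinuousWithinAt.comp (g := fun p : ℝ × ℝ × ℝ => f p.1 p.2.1 p.2.2)
      (f := fun t : ℝ => ((x₁, t, z) : ℝ × ℝ × ℝ)) h1 h2
      (fun t ht => ⟨⟨hx₁0, hx₁X.le⟩, ht, ⟨hz0, hzz⟩⟩)
  obtain ⟨y₁, ⟨hy₁0, hy₁Y⟩, hfy₁⟩ := aux_exists_lt hY ⟨hy0, hyY⟩ hcy hfx₁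
  -- Constants
  have hCc0 : 0 ≤ Cc := le_trans (abs_nonneg _) (hcbd x y z hx0 hxX hy0 hyY hz0 hzz)
  set X' := (x₁ + X) / 2 with hX'def
  set Y' := (y₁ + Y) / 2 with hY'def
  have hx₁X' : x₁ < X' := by rw [hX'def]; linarith
  have hX'X : X' < X := by rw [hX'def]; linarith
  have hX'0 : 0 ≤ X' := by rw [hX'def]; linarith
  have hy₁Y' : y₁ < Y' := by rw [hY'def]; linarith
  have hY'Y : Y' < Y := by rw [hY'def]; linarith
  have hY'0 : 0 ≤ Y' := by rw [hY'def]; linarith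
  set B := Cc + 1 with hBdef
  -- compact set and max of g
  set K := Set.Icc (0:ℝ) X' ×ˢ Set.Icc (0:ℝ) Y' ×ˢ Set.Icc (0:ℝ) z₀ with hKdef
  have hKB : K ⊆ Set.Icc 0 X ×ˢ Set.Icc 0 Y ×ˢ Set.Icc 0 z₀ :=
    Set.prod_mono (Set.Icc_subset_Icc le_rfl hX'X.le)
      (Set.prod_mono (Set.Icc_subset_Icc le_rfl hY'Y.le) subset_rfl)
  have hgc : ContinuousOn (fun p : ℝ × ℝ × ℝ => Real.exp (-(B * p.1)) * f p.1 p.2.1 p.2.2) K :=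
    (Real.continuous_exp.comp ((continuous_const.mul continuous_fst).neg)).continuousOn.mul
      (hfc.mono hKB)
  have hKc : IsCompact K := isCompact_Icc.prod (isCompact_Icc.prod isCompact_Icc)
  have hKne : K.Nonempty := ⟨(0, 0, 0), ⟨⟨le_rfl, hX'0⟩, ⟨le_rfl, hY'0⟩, ⟨le_rfl, hz₀.le⟩⟩⟩
  obtain ⟨p, hpK, hpmax⟩ := hKc.exists_isMaxOn hKne hgc
  obtain ⟨a, bb, cz⟩ := p
  obtain ⟨⟨ha0, haX'⟩, ⟨hb0, hbY'⟩, hcz0', hczz'⟩ := hpK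
  have ha0 : (0:ℝ) ≤ a := ha0
  have haX' : a ≤ X' := haX'
  have hb0 : (0:ℝ) ≤ bb := hb0
  have hbY' : bb ≤ Y' := hbY'
  have hcz0' : (0:ℝ) ≤ cz := hcz0'
  have hczz' : cz ≤ z₀ := hczz'
  have hmax : ∀ q ∈ K, Real.exp (-(B * q.1)) * f q.1 q.2.1 q.2.2 ≤
      Real.exp (-(B * a)) * f a bb cz := fun q hq => hpmax hq
  -- positivity of the max
  have hx₁K : ((x₁, y₁, z) : ℝ × ℝ × ℝ) ∈ K :=
    ⟨⟨hx₁0, hx₁X'.le⟩, ⟨hy₁0, hy₁Y'.le⟩, ⟨hz0, hzz⟩⟩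
  have hMpos : 0 < Real.exp (-(B * a)) * f a bb cz :=
    lt_of_lt_of_le (mul_pos (Real.exp_pos _) hfy₁) (hmax (x₁, y₁, z) hx₁K)
  have hfp : 0 < f a bb cz := by
    by_contra hle
    push_neg at hle
    nlinarith [Real.exp_pos (-(B * a))]
  -- coordinates are interior (in the relevant sense)
  have haXle : a ≤ X := haX'.trans hX'X.le
  have hbYle : bb ≤ Y := hbY'.trans hY'Y.le
  have ha0' : 0 < a := by
    rcases ha0.lt_or_eq with h | h
    · exact h
    · have h' : (0:ℝ) = a := h
      have hfp' := hfp
      rw [← h'] at hfp'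
      exact absurd (hbdx bb cz hb0 hbYle hcz0' hczz') (by linarith)
  have hb0' : 0 < bb := by
    rcases hb0.lt_or_eq with h | h
    · exact h
    · have h' : (0:ℝ) = bb := h
      have hfp' := hfp
      rw [← h'] at hfp'
      exact absurd (hbdy a cz ha0 haXle hcz0' hczz') (by linarith)
  have hcz0 : 0 < cz := by
    rcases hcz0'.lt_or_eq with h | h
    · exact h
    · have h' : (0:ℝ) = cz := h
      have hfp' := hfp
      rw [← h'] at hfp'
      exact absurd ((hbdz a bb ha0 haXle hb0 hbYle).1) (by linarith)
  have hczlt : cz < z₀ := by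
    rcases hczz'.lt_or_eq with h | h
    · exact h
    · have h' : cz = z₀ := h
      have hfp' := hfp
      rw [h'] at hfp'
      exact absurd ((hbdz a bb ha0 haXle hb0 hbYle).2) (by linarith)
  have haX : a < X := lt_of_le_of_lt haX' hX'X
  have hbY : bb < Y := lt_of_le_of_lt hbY' hY'Y
  -- differentiability of slices
  have hdiffAt : ∀ a' b' t : ℝ, 0 < a' → a' < X → 0 < b' → b' < Y → 0 < t → t < z₀ →
      DifferentiableAt ℝ (fun p : ℝ × ℝ × ℝ => f p.1 p.2.1 p.2.2) (a', b', t) := by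
    intro a' b' t h1 h2 h3 h4 h5 h6
    have hopen : IsOpen (Set.Ioo (0:ℝ) X ×ˢ Set.Ioo (0:ℝ) Y ×ˢ Set.Ioo (0:ℝ) z₀) :=
      isOpen_Ioo.prod (isOpen_Ioo.prod isOpen_Ioo)
    have hnhds : (Set.Icc 0 X ×ˢ Set.Icc 0 Y ×ˢ Set.Icc 0 z₀ : Set (ℝ × ℝ × ℝ)) ∈
        𝓝 ((a', b', t) : ℝ × ℝ × ℝ) :=
      Filter.mem_of_superset (hopen.mem_nhds ⟨⟨h1, h2⟩, ⟨h3, h4⟩, ⟨h5, h6⟩⟩)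
        (Set.prod_mono Set.Ioo_subset_Icc_self
          (Set.prod_mono Set.Ioo_subset_Icc_self Set.Ioo_subset_Icc_self))
    exact (hf.contDiffAt hnhds).differentiableAt (by simp)
  have hψd : ∀ t ∈ Set.Ioo (0:ℝ) z₀, DifferentiableAt ℝ (fun s => f a bb s) t := by
    intro t ht
    have h1 := hdiffAt a bb t ha0' haX hb0' hbY ht.1 ht.2
    have h2 : DifferentiableAt ℝ (fun s : ℝ => ((a, bb, s) : ℝ × ℝ × ℝ)) t :=
      (differentiableAt_const _).prodMk ((differentiableAt_const _).prodMk differentiableAt_id)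
    exact DifferentiableAt.comp (g := fun p : ℝ × ℝ × ℝ => f p.1 p.2.1 p.2.2) t h1 h2
  -- maximality along the z-slice
  have hψmax : ∀ t ∈ Set.Icc (0:ℝ) z₀, f a bb t ≤ f a bb cz := by
    intro t ht
    have := hmax (a, bb, t) ⟨⟨ha0, haX'⟩, ⟨hb0, hbY'⟩, ht⟩
    exact le_of_mul_le_mul_left this (Real.exp_pos _)
  -- pd3 vanishes
  have hpd3 : deriv (fun t => f a bb t) cz = 0 := by
    have hloc : IsLocalMax (fun t => f a bb t) cz := by
      filter_upwards [isOpen_Ioo.mem_nhds (⟨hcz0, hczlt⟩ : cz ∈ Set.Ioo 0 z₀)] with t ht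
      exact hψmax t ⟨ht.1.le, ht.2.le⟩
    exact hloc.deriv_eq_zero
  -- pd1 bound
  have hφd : DifferentiableAt ℝ (fun t => f t bb cz) a := by
    have h1 := hdiffAt a bb cz ha0' haX hb0' hbY hcz0 hczlt
    have h2 : DifferentiableAt ℝ (fun t : ℝ => ((t, bb, cz) : ℝ × ℝ × ℝ)) a :=
      differentiableAt_id.prodMk ((differentiableAt_const _).prodMk (differentiableAt_const _))
    exact h1.comp a h2
  have hexp : HasDerivAt (fun t : ℝ => Real.exp (-(B * t))) (Real.exp (-(B * a)) * (-B)) a := by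
    have h1 : HasDerivAt (fun t : ℝ => -(B * t)) (-B) a := by
      simpa [neg_mul] using (hasDerivAt_id a).const_mul (-B)
    exact h1.exp
  have hγ : HasDerivAt (fun t => Real.exp (-(B * t)) * f t bb cz)
      (Real.exp (-(B * a)) * (-B) * f a bb cz +
        Real.exp (-(B * a)) * deriv (fun t => f t bb cz) a) a :=
    hexp.mul hφd.hasDerivAt
  have hγmax : ∀ t ∈ Set.Icc 0 a, Real.exp (-(B * t)) * f t bb cz ≤
      Real.exp (-(B * a)) * f a bb cz := by
    intro t ht
    exact hmax (t, bb, cz) ⟨⟨ht.1, ht.2.trans haX'⟩, ⟨hb0, hbY'⟩, ⟨hcz0.le, hczlt.le⟩⟩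
  have h0γ : 0 ≤ deriv (fun t => Real.exp (-(B * t)) * f t bb cz) a :=
    aux_deriv_nonneg_of_max_left ha0' hγ.differentiableAt hγmax
  rw [hγ.deriv] at h0γ
  have hpd1 : B * f a bb cz ≤ deriv (fun t => f t bb cz) a := by
    nlinarith [Real.exp_pos (-(B * a))]
  -- pd2 bound
  have hβd : DifferentiableAt ℝ (fun t => f a t cz) bb := by
    have h1 := hdiffAt a bb cz ha0' haX hb0' hbY hcz0 hczlt
    have h2 : DifferentiableAt ℝ (fun t : ℝ => ((a, t, cz) : ℝ × ℝ × ℝ)) bb :=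
      (differentiableAt_const _).prodMk (differentiableAt_id.prodMk (differentiableAt_const _))
    exact h1.comp bb h2
  have hβmax : ∀ t ∈ Set.Icc (0:ℝ) bb, f a t cz ≤ f a bb cz := by
    intro t ht
    have := hmax (a, t, cz) ⟨⟨ha0, haX'⟩, ⟨ht.1, ht.2.trans hbY'⟩, ⟨hcz0.le, hczlt.le⟩⟩
    exact le_of_mul_le_mul_left this (Real.exp_pos _)
  have hpd2 : 0 ≤ deriv (fun t => f a t cz) bb :=
    aux_deriv_nonneg_of_max_left hb0' hβd hβmax
  -- second order term
  have hT : deriv (fun t => deriv (fun s => f a bb s) t / u1 a bb t) cz ≤ 0 :=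
    aux_second_order ⟨hcz0, hczlt⟩ hψd
      (fun t ht => hu1 a bb t ha0' haXle hb0' hbYle ht.1 ht.2) hψmax hpd3
  -- contradiction with hL
  have hq := hqt a bb cz ha0' haXle hb0' hbYle hcz0 hczlt
  have hun' := hun a bb cz ha0' haXle hb0' hbYle hcz0 hczlt
  have hu1' := hu1 a bb cz ha0' haXle hb0' hbYle hcz0 hczlt
  have hcge : -Cc ≤ c a bb cz :=
    neg_le_of_abs_le (hcbd a bb cz ha0 haXle hb0 hbYle hcz0.le hczlt.le)
  have hLp := hL a bb cz ha0' haXle hb0' hbYle hcz0 hczlt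
  simp only [Lop, Dpsi, pd1, pd2, pd3] at hLp
  rw [hpd3] at hLp
  simp only [mul_zero, sub_zero, zero_div, zero_mul] at hLp
  have hterm2 : 0 ≤ (1 + qt a bb cz) * deriv (fun t => f a t cz) bb :=
    mul_nonneg hq.le hpd2
  have hterm4 : un a bb cz *
      (deriv (fun t => deriv (fun s => f a bb s) t / u1 a bb t) cz / u1 a bb cz) ≤ 0 :=
    mul_nonpos_of_nonneg_of_nonpos hun'.le (div_nonpos_of_nonpos_of_nonneg hT hu1'.le)
  have hterm5 : -Cc * f a bb cz ≤ c a bb cz * f a bb cz :=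
    mul_le_mul_of_nonneg_right hcge hfp.le
  rw [hBdef] at hpd1
  linarith [hpd1, hterm2, hterm4, hterm5, hLp, hfp]
end
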